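/- arXiv:1401.7759 — 2 statements merged into one kernel-verified Lean document; each statement's English description precedes it below -/
import Mathlib

section
/- Let K be a field, let i₁ < … < i_s be distinct indices in {1,…,n}, let e₁,…,e_s be natural numbers, and let J be a nonzero ideal of R = K[x₁,…,xₙ]. Set I = ⟨x_{i₁}⟩^{e₁}·…·⟨x_{i_s}⟩^{e_s}·J. Then for every point p ∈ Kⁿ with p_{i₁} = … = p_{i_s} = 0 one has ord_p(I) = e₁ + … + e_s + ord_p(J). In particular, if there is an integer o with ord_p(J) ≤ o for all such p and e₁ + … + e_s + o < b, then no point p with p_{i₁} = … = p_{i_s} = 0 lies in the singular locus of (I,b). -/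
/-- The maximal ideal `m_p` of polynomials vanishing at the point `p ∈ Kⁿ`. -/
noncomputable def vanishingIdeal {K : Type*} [Field K] {n : ℕ} (p : Fin n → K) :
    Ideal (MvPolynomial (Fin n) K) :=
  RingHom.ker (MvPolynomial.eval p)

/-- `ord_p(I)`: the largest `m` with `I ⊆ m_p^m` (for a nonzero ideal `I`). -/
noncomputable def ordIdeal {K : Type*} [Field K] {n : ℕ} (p : Fin n → K)
    (I : Ideal (MvPolynomial (Fin n) K)) : ℕ :=
  sSup {m : ℕ | I ≤ vanishingIdeal p ^ m}

/-
Translating by `Xᵢ ↦ Xᵢ + pᵢ` moves `p` to the origin, turns `m_p` into the ideal of the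
variables and fixes the variables `x_{i_j}`, since `p_{i_j} = 0`. At the origin, `m^k` consists
of the polynomials all of whose monomials have degree at least `k`, and multiplying by a monic
monomial `x^d` shifts every exponent by `d`; hence `x^d g ∈ m^(|d| + k)` iff `g ∈ m^k`. The
order of `J` is attained because, by Krull's intersection theorem, a nonzero ideal does not lie
in every power of `m_p`.
-/

namespace MvPolynomial

variable {σ R : Type*}

section idealOfVars

variable [CommSemiring R]

theorem monomial_one_mul_mem_pow_idealOfVars_iff (d : σ →₀ ℕ) (g : MvPolynomial σ R)
    (k : ℕ) :
    monomial d 1 * g ∈ idealOfVars σ R ^ (d.degree + k) ↔ g ∈ idealOfVars σ R ^ k := by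
  classical
  constructor
  · intro h
    rw [mem_pow_idealOfVars_iff'] at h ⊢
    intro x hx
    simpa [coeff_monomial_mul] using h (d + x) (by rw [map_add]; omega)
  · intro h
    rw [pow_add]
    refine Ideal.mul_mem_mul ((mem_pow_idealOfVars_iff _ _).2 fun x hx => ?_) h
    rw [Finset.mem_singleton.1 (support_monomial_subset hx)]

theorem span_monomial_one_mul_le_pow_idealOfVars_iff (d : σ →₀ ℕ)
    (J : Ideal (MvPolynomial σ R)) (k : ℕ) :
    Ideal.span {monomial d 1} * J ≤ idealOfVars σ R ^ (d.degree + k) ↔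
      J ≤ idealOfVars σ R ^ k := by
  rw [Ideal.span_singleton_mul_le_iff]
  exact forall₂_congr fun g _ => monomial_one_mul_mem_pow_idealOfVars_iff d g k

theorem ker_constantCoeff : RingHom.ker (constantCoeff (σ := σ) (R := R)) = idealOfVars σ R := by
  ext f
  rw [← pow_one (idealOfVars σ R), mem_pow_idealOfVars_iff', RingHom.mem_ker]
  simp [Finsupp.degree_eq_zero_iff, constantCoeff_eq]

theorem prod_span_X_pow {ι : Type*} (s : Finset ι) (v : ι → σ) (e : ι → ℕ) :
    ∏ j ∈ s, Ideal.span {(X (v j) : MvPolynomial σ R)} ^ e j =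
      Ideal.span {monomial (∑ j ∈ s, Finsupp.single (v j) (e j)) 1} := by
  simp only [Ideal.span_singleton_pow, Ideal.prod_span_singleton, monomial_sum_one,
    X_pow_eq_monomial]

end idealOfVars

section translate

variable [CommRing R]

noncomputable def translate (p : σ → R) : MvPolynomial σ R ≃ₐ[R] MvPolynomial σ R :=
  AlgEquiv.ofAlgHom (aeval fun i => X i + C (p i)) (aeval fun i => X i - C (p i))
    (algHom_ext fun i => by simp) (algHom_ext fun i => by simp)

@[simp]
theorem translate_X (p : σ → R) (i : σ) : translate p (X i) = X i + C (p i) :=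
  aeval_X _ i

@[simp]
theorem translate_C (p : σ → R) (a : R) : translate p (C a) = C a :=
  (translate p).commutes a

theorem constantCoeff_translate (p : σ → R) (f : MvPolynomial σ R) :
    constantCoeff (translate p f) = eval p f := by
  induction f using MvPolynomial.induction_on <;> simp_all

theorem comap_translate_idealOfVars (p : σ → R) :
    (idealOfVars σ R).comap (translate p) = RingHom.ker (eval p) := by
  ext f
  simp [← ker_constantCoeff, constantCoeff_translate]

end translate

end MvPolynomial

section ordIdeal

open MvPolynomial (idealOfVars monomial X)

variable {K : Type*} [Field K] {n : ℕ}

theorem vanishingIdeal_zero : vanishingIdeal (0 : Fin n → K) = idealOfVars (Fin n) K := by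
  rw [vanishingIdeal, MvPolynomial.eval_zero, MvPolynomial.ker_constantCoeff]

theorem vanishingIdeal_pow_eq_comap (p : Fin n → K) (k : ℕ) :
    vanishingIdeal p ^ k = (idealOfVars (Fin n) K ^ k).comap (MvPolynomial.translate p) := by
  let e := (MvPolynomial.translate p).toRingEquiv
  change _ = (idealOfVars (Fin n) K ^ k).comap e
  rw [← Ideal.map_symm, Ideal.map_pow, Ideal.map_symm, vanishingIdeal,
    ← MvPolynomial.comap_translate_idealOfVars]
  rfl

theorem ordIdeal_eq_ordIdeal_zero_map_translate (p : Fin n → K)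
    (I : Ideal (MvPolynomial (Fin n) K)) :
    ordIdeal p I = ordIdeal 0 (I.map (MvPolynomial.translate p)) := by
  simp only [ordIdeal, Ideal.map_le_iff_le_comap, vanishingIdeal_zero, vanishingIdeal_pow_eq_comap]

theorem bddAbove_setOf_le_vanishingIdeal_pow (p : Fin n → K)
    {I : Ideal (MvPolynomial (Fin n) K)} (hI : I ≠ ⊥) :
    BddAbove {m | I ≤ vanishingIdeal p ^ m} := by
  by_contra h
  rw [not_bddAbove_iff] at h
  refine hI (eq_bot_iff.2 ?_)
  rw [← Ideal.iInf_pow_eq_bot_of_isDomain _ (RingHom.ker_ne_top (MvPolynomial.eval p))]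
  refine le_iInf fun k => ?_
  obtain ⟨m, hm, hkm⟩ := h k
  exact hm.trans (Ideal.pow_le_pow_right hkm.le)

theorem le_vanishingIdeal_pow_ordIdeal (p : Fin n → K)
    {I : Ideal (MvPolynomial (Fin n) K)} (hI : I ≠ ⊥) :
    I ≤ vanishingIdeal p ^ ordIdeal p I :=
  Nat.sSup_mem ⟨0, by simp⟩ (bddAbove_setOf_le_vanishingIdeal_pow p hI)

theorem not_le_vanishingIdeal_pow_ordIdeal_succ (p : Fin n → K)
    {I : Ideal (MvPolynomial (Fin n) K)} (hI : I ≠ ⊥) :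
    ¬ I ≤ vanishingIdeal p ^ (ordIdeal p I + 1) := fun h =>
  (le_csSup (bddAbove_setOf_le_vanishingIdeal_pow p hI) h).not_gt (Nat.lt_succ_self _)

theorem ordIdeal_eq_of_le_of_not_le {p : Fin n → K} {I : Ideal (MvPolynomial (Fin n) K)} {k : ℕ}
    (h : I ≤ vanishingIdeal p ^ k) (h' : ¬ I ≤ vanishingIdeal p ^ (k + 1)) :
    ordIdeal p I = k :=
  IsGreatest.csSup_eq ⟨h, fun _ hm =>
    not_lt.1 fun hkm => h' (hm.trans (Ideal.pow_le_pow_right hkm))⟩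

theorem ordIdeal_zero_span_monomial_mul (d : Fin n →₀ ℕ) {J : Ideal (MvPolynomial (Fin n) K)}
    (hJ : J ≠ ⊥) :
    ordIdeal 0 (Ideal.span {monomial d 1} * J) = d.degree + ordIdeal 0 J := by
  apply ordIdeal_eq_of_le_of_not_le
  · rw [vanishingIdeal_zero, MvPolynomial.span_monomial_one_mul_le_pow_idealOfVars_iff,
      ← vanishingIdeal_zero]
    exact le_vanishingIdeal_pow_ordIdeal 0 hJ
  · rw [add_assoc, vanishingIdeal_zero, MvPolynomial.span_monomial_one_mul_le_pow_idealOfVars_iff,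
      ← vanishingIdeal_zero]
    exact not_le_vanishingIdeal_pow_ordIdeal_succ 0 hJ

theorem ordIdeal_span_monomial_mul (p : Fin n → K) {d : Fin n →₀ ℕ}
    (hd : ∀ i ∈ d.support, p i = 0) {J : Ideal (MvPolynomial (Fin n) K)} (hJ : J ≠ ⊥) :
    ordIdeal p (Ideal.span {monomial d 1} * J) = d.degree + ordIdeal p J := by
  have hfix : MvPolynomial.translate p (monomial d 1) = monomial d 1 := by
    rw [← MvPolynomial.prod_X_pow_eq_monomial, map_prod]
    exact Finset.prod_congr rfl fun i hi => by simp [hd i hi]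
  have hJ' : J.map (MvPolynomial.translate p) ≠ ⊥ :=
    (Ideal.map_eq_bot_iff_of_injective (MvPolynomial.translate p).injective).not.2 hJ
  rw [ordIdeal_eq_ordIdeal_zero_map_translate, Ideal.map_mul, Ideal.map_span, Set.image_singleton,
    hfix, ordIdeal_zero_span_monomial_mul d hJ', ← ordIdeal_eq_ordIdeal_zero_map_translate]

theorem ordIdeal_prod_span_X_pow_mul {ι : Type*} (t : Finset ι) (v : ι → Fin n)
    (e : ι → ℕ) (p : Fin n → K) (hp : ∀ j ∈ t, p (v j) = 0)
    {J : Ideal (MvPolynomial (Fin n) K)} (hJ : J ≠ ⊥) :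
    ordIdeal p ((∏ j ∈ t, Ideal.span {X (v j)} ^ e j) * J) =
      ∑ j ∈ t, e j + ordIdeal p J := by
  rw [MvPolynomial.prod_span_X_pow, ordIdeal_span_monomial_mul p _ hJ, map_sum]
  · simp only [Finsupp.degree_single]
  · intro i hi
    obtain ⟨j, hj, hij⟩ := Finset.mem_biUnion.1 (Finsupp.support_finsetSum hi)
    rw [Finset.mem_singleton.1 (Finsupp.support_single_subset hij)]
    exact hp j hj

end ordIdeal

theorem stmt_8_general {K : Type*} [Field K] {n s : ℕ} (ι : Fin s → Fin n)
    (e : Fin s → ℕ) (J : Ideal (MvPolynomial (Fin n) K)) (hJ : J ≠ ⊥) :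
    (∀ p : Fin n → K, (∀ j, p (ι j) = 0) →
      ordIdeal p ((∏ j, Ideal.span {MvPolynomial.X (ι j)} ^ e j) * J) =
        (∑ j, e j) + ordIdeal p J) ∧
    (∀ o b : ℕ,
      (∀ p : Fin n → K, (∀ j, p (ι j) = 0) → ordIdeal p J ≤ o) →
      (∑ j, e j) + o < b →
      ∀ p : Fin n → K, (∀ j, p (ι j) = 0) →
        ¬ b ≤ ordIdeal p ((∏ j, Ideal.span {MvPolynomial.X (ι j)} ^ e j) * J)) := by
  have hord (p : Fin n → K) (hp : ∀ j, p (ι j) = 0) :=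
    ordIdeal_prod_span_X_pow_mul Finset.univ ι e p (fun j _ => hp j) hJ
  refine ⟨hord, fun o b ho hob p hp => ?_⟩
  have := ho p hp
  rw [hord p hp]
  omega

/-- For distinct indices `i₁ < … < i_s`, exponents `e₁,…,e_s`, a
nonzero ideal `J` and `I = ⟨x_{i₁}⟩^{e₁}·…·⟨x_{i_s}⟩^{e_s}·J`, every point `p` with
`p_{i₁} = … = p_{i_s} = 0` satisfies `ord_p(I) = e₁+…+e_s + ord_p(J)`.  In particular,
if `ord_p(J) ≤ o` for all such `p` and `e₁+…+e_s+o < b`, then no such point lies in the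
singular locus of `(I,b)`. -/
theorem stmt_8 {K : Type*} [Field K] {n s : ℕ} (ι : Fin s → Fin n) (hι : StrictMono ι)
    (e : Fin s → ℕ) (J : Ideal (MvPolynomial (Fin n) K)) (hJ : J ≠ ⊥) :
    (∀ p : Fin n → K, (∀ j, p (ι j) = 0) →
      ordIdeal p ((∏ j, Ideal.span {MvPolynomial.X (ι j)} ^ e j) * J) =
        (∑ j, e j) + ordIdeal p J) ∧
    (∀ o b : ℕ,
      (∀ p : Fin n → K, (∀ j, p (ι j) = 0) → ordIdeal p J ≤ o) →
      (∑ j, e j) + o < b →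
      ∀ p : Fin n → K, (∀ j, p (ι j) = 0) →
        ¬ b ≤ ordIdeal p ((∏ j, Ideal.span {MvPolynomial.X (ι j)} ^ e j) * J)) :=
  stmt_8_general ι e J hJ
end

section
/- Let K be an algebraically closed field of characteristic zero, let I be an ideal of R = K[x₁,…,xₙ], and let a ≥ 0 be an integer. Then Δ^a(I) = ⟨1⟩ if and only if ord_p(I) ≤ a for every point p ∈ Kⁿ. Consequently, the minimum a with Δ^a(I) = ⟨1⟩ (when it exists) equals the maximum over all points p of ord_p(I), i.e. the maxorder of (I,1) is the maximum of the order function p ↦ ord_p(I). -/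
/-- The operator `Δ`: the ideal generated by `I` together with all first order
partial derivatives of elements of `I`. -/
noncomputable def deltaOp {K : Type*} [Field K] {n : ℕ}
    (I : Ideal (MvPolynomial (Fin n) K)) : Ideal (MvPolynomial (Fin n) K) :=
  I ⊔ Ideal.span {g | ∃ f ∈ I, ∃ i : Fin n, g = MvPolynomial.pderiv i f}

/-!
Differentiation lowers the order at a point by at most one, so `I ⊆ m_p^(a+1)` forces
`Δ^a(I) ⊆ m_p`. Conversely, in characteristic zero the Euler derivation `E = ∑ (xᵢ - pᵢ) ∂ᵢ`
acts on `m_p^(k+1) / m_p^(k+2)` as multiplication by the unit `k + 1`, so an element of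
`m_p^(k+1)` whose partial derivatives all lie in `m_p^(k+1)` lies in `m_p^(k+2)`. Hence
`Δ^a(I) ⊆ m_p` iff `I ⊆ m_p^(a+1)`, and by the weak Nullstellensatz `Δ^a(I) = ⟨1⟩` iff no
`m_p` contains it. So the `a` with `Δ^a(I) = ⟨1⟩` are exactly the upper bounds of the orders
of `I`, and the least upper bound is the maximal order.
-/

namespace Derivation

variable {R A : Type*} [CommSemiring R] [CommRing A] [Algebra R A] (D : Derivation R A A)
  (J : Ideal A)

theorem map_mem_pow_of_mem_pow_succ (k : ℕ) {f : A} (hf : f ∈ J ^ (k + 1)) :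
    D f ∈ J ^ k := by
  induction k generalizing f with
  | zero => simp
  | succ k ih =>
    rw [pow_succ] at hf
    refine Submodule.mul_induction_on hf (fun a ha b hb => ?_) (fun x y hx hy => ?_)
    · rw [D.leibniz, smul_eq_mul, smul_eq_mul]
      exact Ideal.add_mem _ (Ideal.mul_mem_right _ _ ha)
        (pow_succ' J k ▸ Ideal.mul_mem_mul hb (ih ha))
    · rw [map_add]
      exact Ideal.add_mem _ hx hy

theorem sub_mem_sq_of_span {S : Set A} (hJ : J = Ideal.span S) (hD : ∀ a, D a ∈ J)
    (hS : ∀ s ∈ S, D s - s ∈ J ^ 2) {f : A} (hf : f ∈ J) : D f - f ∈ J ^ 2 := by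
  rw [hJ] at hf
  induction hf using Submodule.span_induction with
  | mem s hs => exact hS s hs
  | zero => simp
  | add x y _ _ hx hy =>
    rw [map_add, add_sub_add_comm]
    exact Ideal.add_mem _ hx hy
  | smul a x hxS hx =>
    have hxJ : x ∈ J := hJ ▸ hxS
    have h : D (a • x) - a • x = a * (D x - x) + x * D a := by
      rw [smul_eq_mul, D.leibniz, smul_eq_mul, smul_eq_mul]; ring
    rw [h]
    exact Ideal.add_mem _ (Ideal.mul_mem_left _ _ hx) (sq J ▸ Ideal.mul_mem_mul hxJ (hD a))

theorem sub_nsmul_mem_pow_of_mem_pow (hD : ∀ x ∈ J, D x - x ∈ J ^ 2) (k : ℕ) {f : A}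
    (hf : f ∈ J ^ (k + 1)) : D f - (k + 1) • f ∈ J ^ (k + 2) := by
  induction k generalizing f with
  | zero => simpa using hD f (by simpa using hf)
  | succ k ih =>
    rw [pow_succ] at hf
    refine Submodule.mul_induction_on hf (fun a ha b hb => ?_) (fun x y hx hy => ?_)
    · have h : D (a * b) - (k + 1 + 1) • (a * b) = a * (D b - b) + b * (D a - (k + 1) • a) := by
        rw [D.leibniz, smul_eq_mul, smul_eq_mul, nsmul_eq_mul, nsmul_eq_mul]; push_cast; ring
      rw [h]
      refine Ideal.add_mem _ ?_ ?_
      · simpa only [← pow_add] using Ideal.mul_mem_mul ha (hD b hb)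
      · simpa only [← pow_succ'] using Ideal.mul_mem_mul hb (ih ha)
    · rw [map_add, nsmul_add, add_sub_add_comm]
      exact Ideal.add_mem _ hx hy

end Derivation

namespace MvPolynomial

variable {σ R : Type*} [CommRing R]

theorem sub_C_eval_mem_span_X_sub_C (p : σ → R) (f : MvPolynomial σ R) :
    f - C (eval p f) ∈ Ideal.span (Set.range fun i => X i - C (p i)) := by
  induction f using MvPolynomial.induction_on with
  | C a => simp
  | add g h hg hh =>
    rw [map_add, map_add, add_sub_add_comm]
    exact Ideal.add_mem _ hg hh
  | mul_X g i hg =>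
    have h : g * X i - C (eval p (g * X i)) =
        g * (X i - C (p i)) + (g - C (eval p g)) * C (p i) := by
      rw [map_mul, eval_X, map_mul]; ring
    rw [h]
    exact Ideal.add_mem _ (Ideal.mul_mem_left _ _ (Ideal.subset_span ⟨i, rfl⟩))
      (Ideal.mul_mem_right _ _ hg)

end MvPolynomial

section VanishingIdeal

open MvPolynomial

variable {K : Type*} [Field K] {n : ℕ}

theorem X_sub_C_mem_vanishingIdeal (p : Fin n → K) (i : Fin n) :
    X i - C (p i) ∈ vanishingIdeal p := by
  simp [_root_.vanishingIdeal, RingHom.mem_ker]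

theorem vanishingIdeal_eq_span (p : Fin n → K) :
    vanishingIdeal p = Ideal.span (Set.range fun i => X i - C (p i)) := by
  refine le_antisymm (fun f hf => ?_) ?_
  · have hf0 : eval p f = 0 := RingHom.mem_ker.mp hf
    simpa [hf0] using sub_C_eval_mem_span_X_sub_C p f
  · rw [Ideal.span_le]
    rintro _ ⟨i, rfl⟩
    exact X_sub_C_mem_vanishingIdeal p i

theorem vanishingIdeal_ne_top (p : Fin n → K) : vanishingIdeal p ≠ ⊤ :=
  (Ideal.ne_top_iff_one _).mpr (by simp [_root_.vanishingIdeal, RingHom.mem_ker])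

end VanishingIdeal

section EulerDerivation

open MvPolynomial

variable {K : Type*} [Field K] {n : ℕ}

noncomputable def eulerDerivation (p : Fin n → K) :
    Derivation K (MvPolynomial (Fin n) K) (MvPolynomial (Fin n) K) :=
  ∑ i, (X i - C (p i)) • pderiv i

theorem eulerDerivation_apply (p : Fin n → K) (f : MvPolynomial (Fin n) K) :
    eulerDerivation p f = ∑ i, (X i - C (p i)) * pderiv i f := by
  rw [eulerDerivation, ← Derivation.coeFnAddMonoidHom_apply, map_sum, Finset.sum_apply]
  simp only [Derivation.coeFnAddMonoidHom_apply, Derivation.smul_apply, smul_eq_mul]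

theorem eulerDerivation_mem_vanishingIdeal (p : Fin n → K) (f : MvPolynomial (Fin n) K) :
    eulerDerivation p f ∈ vanishingIdeal p := by
  rw [eulerDerivation_apply]
  exact Ideal.sum_mem _ fun i _ => Ideal.mul_mem_right _ _ (X_sub_C_mem_vanishingIdeal p i)

theorem eulerDerivation_X_sub_C (p : Fin n → K) (i : Fin n) :
    eulerDerivation p (X i - C (p i)) = X i - C (p i) := by
  rw [eulerDerivation_apply, Finset.sum_eq_single i]
  · simp
  · intro j _ hj
    simp [hj]
  · simp

theorem eulerDerivation_sub_nsmul_mem_pow (p : Fin n → K) (k : ℕ) {f : MvPolynomial (Fin n) K}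
    (hf : f ∈ vanishingIdeal p ^ (k + 1)) :
    eulerDerivation p f - (k + 1) • f ∈ vanishingIdeal p ^ (k + 2) := by
  refine (eulerDerivation p).sub_nsmul_mem_pow_of_mem_pow _ (fun x hx => ?_) k hf
  refine (eulerDerivation p).sub_mem_sq_of_span _ (vanishingIdeal_eq_span p)
    (eulerDerivation_mem_vanishingIdeal p) ?_ hx
  rintro _ ⟨i, rfl⟩
  simp [eulerDerivation_X_sub_C]

/-- The nontrivial direction is Euler's identity `E f ≡ (k + 1) f mod m_p^(k+2)`, with `k + 1`
invertible in characteristic zero. -/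
theorem mem_vanishingIdeal_pow_succ_succ_iff [CharZero K] (p : Fin n → K) (k : ℕ)
    (f : MvPolynomial (Fin n) K) :
    f ∈ vanishingIdeal p ^ (k + 2) ↔
      f ∈ vanishingIdeal p ^ (k + 1) ∧ ∀ i, pderiv i f ∈ vanishingIdeal p ^ (k + 1) := by
  refine ⟨fun hf => ⟨Ideal.pow_le_pow_right (by omega) hf,
    fun i => (pderiv i).map_mem_pow_of_mem_pow_succ _ (k + 1) hf⟩, fun ⟨hf, hdf⟩ => ?_⟩
  have hE : eulerDerivation p f ∈ vanishingIdeal p ^ (k + 2) := by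
    rw [eulerDerivation_apply]
    exact Ideal.sum_mem _ fun i _ =>
      pow_succ' (vanishingIdeal p) (k + 1) ▸
        Ideal.mul_mem_mul (X_sub_C_mem_vanishingIdeal p i) (hdf i)
  have hmul : ((k + 1 : ℕ) : K) • f ∈ vanishingIdeal p ^ (k + 2) := by
    rw [Nat.cast_smul_eq_nsmul]
    simpa using Ideal.sub_mem _ hE (eulerDerivation_sub_nsmul_mem_pow p k hf)
  have hk : ((k + 1 : ℕ) : K) ≠ 0 := Nat.cast_ne_zero.mpr k.succ_ne_zero
  have := Submodule.smul_of_tower_mem _ ((k + 1 : ℕ) : K)⁻¹ hmul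
  rwa [smul_smul, inv_mul_cancel₀ hk, one_smul] at this

end EulerDerivation

section DeltaOp

variable {K : Type*} [Field K] {n : ℕ}

theorem deltaOp_le_iff (I J : Ideal (MvPolynomial (Fin n) K)) :
    deltaOp I ≤ J ↔ I ≤ J ∧ ∀ f ∈ I, ∀ i, MvPolynomial.pderiv i f ∈ J := by
  rw [deltaOp, sup_le_iff, Ideal.span_le]
  refine and_congr_right fun _ => ⟨fun h f hf i => h ⟨f, hf, i, rfl⟩, ?_⟩
  rintro h _ ⟨f, hf, i, rfl⟩
  exact h f hf i

theorem deltaOp_le_vanishingIdeal_pow_iff [CharZero K] (p : Fin n → K) (k : ℕ)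
    (I : Ideal (MvPolynomial (Fin n) K)) :
    deltaOp I ≤ vanishingIdeal p ^ (k + 1) ↔ I ≤ vanishingIdeal p ^ (k + 2) := by
  rw [deltaOp_le_iff]
  simp only [SetLike.le_def, mem_vanishingIdeal_pow_succ_succ_iff]
  exact ⟨fun h f hf => ⟨h.1 hf, h.2 f hf⟩, fun h => ⟨fun f hf => (h hf).1, fun f hf => (h hf).2⟩⟩

theorem iterate_deltaOp_le_vanishingIdeal_iff [CharZero K] (p : Fin n → K) (a : ℕ)
    (I : Ideal (MvPolynomial (Fin n) K)) :
    deltaOp^[a] I ≤ vanishingIdeal p ↔ I ≤ vanishingIdeal p ^ (a + 1) := by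
  induction a generalizing I with
  | zero => simp
  | succ a ih => rw [Function.iterate_succ_apply, ih, deltaOp_le_vanishingIdeal_pow_iff]

theorem eq_top_iff_forall_not_le_vanishingIdeal [IsAlgClosed K]
    (J : Ideal (MvPolynomial (Fin n) K)) : J = ⊤ ↔ ∀ p : Fin n → K, ¬ J ≤ vanishingIdeal p := by
  refine ⟨fun h p hp => vanishingIdeal_ne_top p (top_le_iff.mp (h ▸ hp)), fun h => ?_⟩
  by_contra hJ
  obtain ⟨M, hM, hJM⟩ := Ideal.exists_le_maximal J hJ
  obtain ⟨p, rfl⟩ := MvPolynomial.isMaximal_iff_eq_vanishingIdeal_singleton.mp hM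
  refine h p (hJM.trans fun f hf => ?_)
  simpa [vanishingIdeal, RingHom.mem_ker, MvPolynomial.mem_vanishingIdeal_singleton_iff] using hf

theorem iterate_deltaOp_eq_top_iff [IsAlgClosed K] [CharZero K]
    (I : Ideal (MvPolynomial (Fin n) K)) (a : ℕ) :
    deltaOp^[a] I = ⊤ ↔ ∀ p : Fin n → K, ¬ I ≤ vanishingIdeal p ^ (a + 1) := by
  simp only [eq_top_iff_forall_not_le_vanishingIdeal, iterate_deltaOp_le_vanishingIdeal_iff]

theorem setOf_iterate_deltaOp_eq_top [IsAlgClosed K] [CharZero K]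
    (I : Ideal (MvPolynomial (Fin n) K)) :
    {a : ℕ | deltaOp^[a] I = ⊤} = upperBounds {m | ∃ p : Fin n → K, I ≤ vanishingIdeal p ^ m} := by
  ext a
  simp only [Set.mem_ofPred_eq, iterate_deltaOp_eq_top_iff, mem_upperBounds, forall_exists_index]
  refine ⟨fun h m p hp => ?_, fun h p hp => absurd (h _ p hp) (by omega)⟩
  by_contra! ham
  exact h p (hp.trans (Ideal.pow_le_pow_right ham))

end DeltaOp

/-- Over an algebraically closed field of characteristic zero,
`Δ^a(I) = ⟨1⟩` iff `ord_p(I) ≤ a` (i.e. `I ⊄ m_p^{a+1}`) for every point `p`.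
Consequently, the minimal `a` with `Δ^a(I) = ⟨1⟩`, when it exists, equals the
maximum over all points `p` of `ord_p(I)` (the maxorder of `(I,1)`). -/
theorem stmt_10 {K : Type*} [Field K] [IsAlgClosed K] [CharZero K] {n : ℕ}
    (I : Ideal (MvPolynomial (Fin n) K)) :
    (∀ a : ℕ, deltaOp^[a] I = ⊤ ↔ ∀ p : Fin n → K, ¬ I ≤ vanishingIdeal p ^ (a + 1)) ∧
    (∀ a : ℕ, deltaOp^[a] I = ⊤ →
      sInf {a' : ℕ | deltaOp^[a'] I = ⊤} =
        sSup {m : ℕ | ∃ p : Fin n → K, I ≤ vanishingIdeal p ^ m}) := by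
  refine ⟨iterate_deltaOp_eq_top_iff I, fun a ha => ?_⟩
  have ha_ub : a ∈ upperBounds {m | ∃ p : Fin n → K, I ≤ vanishingIdeal p ^ m} :=
    setOf_iterate_deltaOp_eq_top I ▸ ha
  rw [setOf_iterate_deltaOp_eq_top]
  exact csInf_upperBounds_eq_csSup ⟨a, ha_ub⟩ ⟨0, fun _ => 0, by simp⟩
end
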